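/- arXiv:math/0505026 — 4 statements merged into one kernel-verified Lean document; each statement's English description precedes it below -/
import Mathlib

section
/- As λ → ∞, the integral ∫₀^∞ exp(-λ(x + x^{-2})) dx is asymptotic to exp(-3λ·2^{-2/3}) · √(2^{4/3}π/(3λ)), i.e., the ratio of the two sides tends to 1. -/
/-!
Write `c = 2^{1/3}`. For `x > 0`, `x + x⁻² = 3c/2 + (x - c)² φ(x)` with `φ(x) = (x + c/2)/x²`,
and `φ(c) = 3/(2c)`. Substituting `x = c + u/√λ` turns `√λ e^{3cλ/2} ∫₀^∞ e^{-λ(x + x⁻²)} dx` into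
`∫ e^{-u² φ(c + u/√λ)} du`, whose integrand tends pointwise to the Gaussian `e^{-φ(c) u²}`.
The bound `(x - c)² φ(x) ≥ ¼ min((x - c)², |x - c|)` gives, for `λ ≥ 1`, the integrable majorant
`e^{(1 - |u|)/4}`, since `min(u², √λ|u|) ≥ |u| - 1/4`; dominated convergence then yields the
limit `∫ e^{-φ(c) u²} du = √(π/φ(c))`.
-/

open MeasureTheory Real Filter Set Topology

theorem integral_comp_add_div {E : Type*} [NormedAddCommGroup E] [NormedSpace ℝ E]
    (g : ℝ → E) (x₀ : ℝ) {c : ℝ} (hc : 0 < c) :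
    ∫ u, g (x₀ + u / c) = c • ∫ x, g x := by
  rw [Measure.integral_comp_div (fun v => g (x₀ + v)) c, integral_add_left_eq_self,
    abs_of_pos hc]

theorem integrable_exp_neg_mul_abs {m : ℝ} (hm : 0 < m) :
    Integrable fun u : ℝ => exp (-(m * |u|)) := by
  rw [← integrableOn_univ, ← Iic_union_Ioi (a := 0), integrableOn_union]
  constructor
  · refine (integrableOn_exp_mul_Iic hm 0).congr_fun (fun u hu => ?_) measurableSet_Iic
    rw [abs_of_nonpos hu]; ring_nf
  · refine (integrableOn_exp_mul_Ioi (neg_lt_zero.2 hm) 0).congr_fun (fun u hu => ?_)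
      measurableSet_Ioi
    rw [abs_of_pos hu]; ring_nf

section Laplace

variable {φ : ℝ → ℝ} {s : Set ℝ} {x₀ m : ℝ}

theorem tendsto_indicator_exp_comp_add_div_sqrt (hs : s ∈ 𝓝 x₀) (hφ : ContinuousAt φ x₀)
    (u : ℝ) :
    Tendsto (fun l => s.indicator (fun x => exp (-(l * ((x - x₀) ^ 2 * φ x)))) (x₀ + u / √l))
      atTop (𝓝 (exp (-φ x₀ * u ^ 2))) := by
  have hx : Tendsto (fun l => x₀ + u / √l) atTop (𝓝 x₀) := by
    simpa using tendsto_const_nhds.add (tendsto_const_nhds.div_atTop tendsto_sqrt_atTop)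
  have hlim : Tendsto (fun l => exp (-(u ^ 2 * φ (x₀ + u / √l)))) atTop
      (𝓝 (exp (-φ x₀ * u ^ 2))) := by
    have := ((hφ.tendsto.comp hx).const_mul (u ^ 2)).neg.rexp
    convert this using 2 <;> simp only [Function.comp_apply, neg_mul, mul_comm]
  refine hlim.congr' ?_
  filter_upwards [hx.eventually_mem hs, eventually_gt_atTop 0] with l hmem hl
  rw [indicator_of_mem hmem]
  congr 2
  field_simp
  rw [sq_sqrt hl.le]
  ring

theorem indicator_exp_comp_add_div_sqrt_le (hm : 0 ≤ m)
    (hbound : ∀ x ∈ s, m * min ((x - x₀) ^ 2) |x - x₀| ≤ (x - x₀) ^ 2 * φ x)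
    {l : ℝ} (hl : 1 ≤ l) (u : ℝ) :
    s.indicator (fun x => exp (-(l * ((x - x₀) ^ 2 * φ x)))) (x₀ + u / √l)
      ≤ exp (m / 4) * exp (-(m * |u|)) := by
  by_cases hmem : x₀ + u / √l ∈ s
  · rw [indicator_of_mem hmem, ← exp_add, exp_le_exp]
    have hsqrt : 1 ≤ √l := one_le_sqrt.2 hl
    have hmin : |u| - 1 / 4 ≤ l * min ((u / √l) ^ 2) |u / √l| := by
      have hsq : l * (u / √l) ^ 2 = u ^ 2 := by
        rw [div_pow, sq_sqrt (by linarith)]; field_simp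
      have habs : l * |u / √l| = √l * |u| := by
        rw [abs_div, abs_of_pos (by linarith : 0 < √l)]
        field_simp
        rw [sq_sqrt (by linarith), mul_comm]
      rw [mul_min_of_nonneg _ _ (by linarith), hsq, habs]
      refine le_min ?_ ?_
      · nlinarith [sq_abs u, sq_nonneg (|u| - 1 / 2)]
      · nlinarith [abs_nonneg u]
    have := mul_le_mul_of_nonneg_left (hbound _ hmem) (by linarith : 0 ≤ l)
    simp only [add_sub_cancel_left] at this
    nlinarith [mul_le_mul_of_nonneg_left hmin hm]
  · rw [indicator_of_notMem hmem]
    positivity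

theorem tendsto_sqrt_mul_setIntegral_exp_neg_mul_sq_mul (hs : MeasurableSet s)
    (hx₀ : s ∈ 𝓝 x₀) (hm : 0 < m) (hφm : Measurable φ) (hφ : ContinuousAt φ x₀)
    (hbound : ∀ x ∈ s, m * min ((x - x₀) ^ 2) |x - x₀| ≤ (x - x₀) ^ 2 * φ x) :
    Tendsto (fun l => √l * ∫ x in s, exp (-(l * ((x - x₀) ^ 2 * φ x)))) atTop
      (𝓝 √(π / φ x₀)) := by
  have hlim := tendsto_integral_filter_of_dominated_convergence
    (F := fun l u => s.indicator (fun x => exp (-(l * ((x - x₀) ^ 2 * φ x)))) (x₀ + u / √l))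
    (fun u => exp (m / 4) * exp (-(m * |u|)))
    (Eventually.of_forall fun l => (((by fun_prop : Measurable fun x =>
      exp (-(l * ((x - x₀) ^ 2 * φ x)))).indicator hs).comp
        (by fun_prop : Measurable fun u => x₀ + u / √l)).aestronglyMeasurable)
    (by
      filter_upwards [eventually_ge_atTop 1] with l hl
      refine ae_of_all _ fun u => ?_
      rw [norm_of_nonneg (indicator_nonneg (fun _ _ => (exp_pos _).le) _)]
      exact indicator_exp_comp_add_div_sqrt_le hm.le hbound hl u)
    ((integrable_exp_neg_mul_abs hm).const_mul _)
    (ae_of_all _ (tendsto_indicator_exp_comp_add_div_sqrt hx₀ hφ))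
  rw [integral_gaussian] at hlim
  refine hlim.congr' ?_
  filter_upwards [eventually_gt_atTop 0] with l hl
  rw [integral_comp_add_div _ _ (sqrt_pos.2 hl), integral_indicator hs, smul_eq_mul]

end Laplace

theorem one_fourth_mul_min_le_sq_mul_div_sq {c x : ℝ} (hc₀ : 0 ≤ c) (hc₂ : c ≤ 2) (hx : 0 < x) :
    1 / 4 * min ((x - c) ^ 2) |x - c| ≤ (x - c) ^ 2 * ((x + c / 2) / x ^ 2) := by
  rw [mul_div_assoc', le_div_iff₀ (by positivity)]
  rcases le_total x (2 * c) with hle | hge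
  · have hquarter : x ^ 2 ≤ 4 * (x + c / 2) := by nlinarith
    nlinarith [min_le_left ((x - c) ^ 2) |x - c|, sq_nonneg (x - c)]
  · rw [abs_of_nonneg (by linarith)]
    nlinarith [min_le_right ((x - c) ^ 2) (x - c), mul_nonneg (by linarith : 0 ≤ x - c) hx.le]

noncomputable def cbrtTwo : ℝ := 2 ^ (1 / 3 : ℝ)

theorem cbrtTwo_pos : 0 < cbrtTwo := rpow_pos_of_pos two_pos _

theorem cbrtTwo_pow_three : cbrtTwo ^ 3 = 2 := by
  rw [cbrtTwo, ← rpow_natCast, ← rpow_mul zero_le_two]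
  norm_num

theorem cbrtTwo_le_two : cbrtTwo ≤ 2 := by
  nlinarith [cbrtTwo_pow_three, cbrtTwo_pos, sq_nonneg (cbrtTwo - 2)]

theorem two_rpow_neg_two_div_three : (2 : ℝ) ^ (-(2 : ℝ) / 3) = cbrtTwo / 2 := by
  rw [cbrtTwo, show -(2 : ℝ) / 3 = 1 / 3 - 1 by norm_num, rpow_sub two_pos, rpow_one]

theorem two_rpow_four_div_three : (2 : ℝ) ^ ((4 : ℝ) / 3) = 2 * cbrtTwo := by
  rw [cbrtTwo, show (4 : ℝ) / 3 = 1 + 1 / 3 by norm_num, rpow_add two_pos, rpow_one]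

theorem add_one_div_sq_eq {x : ℝ} (hx : 0 < x) :
    x + 1 / x ^ 2 = 3 * cbrtTwo / 2 + (x - cbrtTwo) ^ 2 * ((x + cbrtTwo / 2) / x ^ 2) := by
  field_simp
  linear_combination -cbrtTwo_pow_three

/-- As `λ → ∞`, `∫₀^∞ exp(-λ(x + x⁻²)) dx ~ exp(-3λ·2^{-2/3}) √(2^{4/3}π/(3λ))`. -/
theorem laplace_asymptotic_x_add_inv_sq :
    Tendsto (fun l : ℝ =>
        (∫ x in Set.Ioi (0:ℝ), Real.exp (-l * (x + 1 / x ^ 2))) /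
          (Real.exp (-3 * l * (2:ℝ) ^ (-(2:ℝ)/3)) *
            Real.sqrt ((2:ℝ) ^ ((4:ℝ)/3) * π / (3 * l))))
      atTop (nhds 1) := by
  set φ : ℝ → ℝ := fun x => (x + cbrtTwo / 2) / x ^ 2
  have hc := cbrtTwo_pos
  have hφc : φ cbrtTwo = 3 / (2 * cbrtTwo) := by simp only [φ]; field_simp; ring
  have hlim := tendsto_sqrt_mul_setIntegral_exp_neg_mul_sq_mul measurableSet_Ioi
    (Ioi_mem_nhds hc) (by norm_num : (0 : ℝ) < 1 / 4) (by fun_prop)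
    (by fun_prop (disch := positivity) : ContinuousAt φ cbrtTwo)
    fun x hx => one_fourth_mul_min_le_sq_mul_div_sq hc.le cbrtTwo_le_two hx
  have hS : 0 < √(π / φ cbrtTwo) := sqrt_pos.2 (by rw [hφc]; positivity)
  have hratio := hlim.div_const √(π / φ cbrtTwo)
  rw [div_self hS.ne'] at hratio
  refine hratio.congr' ?_
  filter_upwards [eventually_gt_atTop 0] with l hl
  have hnum : ∫ x in Ioi (0 : ℝ), exp (-l * (x + 1 / x ^ 2))
      = exp (-l * (3 * cbrtTwo / 2)) *
          ∫ x in Ioi (0 : ℝ), exp (-(l * ((x - cbrtTwo) ^ 2 * φ x))) := by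
    rw [← integral_const_mul]
    refine setIntegral_congr_fun measurableSet_Ioi fun x hx => ?_
    rw [← exp_add, add_one_div_sq_eq hx]
    congr 1
    ring
  have hden : √(2 ^ ((4 : ℝ) / 3) * π / (3 * l)) = √(π / φ cbrtTwo) / √l := by
    rw [← sqrt_div' _ hl.le, two_rpow_four_div_three, hφc]
    field_simp
  rw [hnum, hden, two_rpow_neg_two_div_three]
  field_simp
end

section
/- Let a, b > 0. As t → ∞, ∫₀^∞ exp(-at/u² - bu) du is asymptotic to √(π/3) · 2^{2/3} · a^{1/6} · b^{-2/3} · t^{1/6} · exp(-3 a^{1/3} b^{2/3} 2^{-2/3} t^{1/3}). -/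
/-!
With `r⁶ = 2b²·at`, the substitution `u = (r²/b) v` turns `at/u² + bu` into `r² (v + 1/(2v²))`,
whose minimum `3/2` is attained at `v = 1`. Writing `v = 1 + s/r`, the integrand
`exp (-r² (v + 1/(2v²) - 3/2))` becomes a function of `s` that is dominated uniformly in `r ≥ 1`
and converges to the Gaussian `exp (-3s²/2)`, so the Laplace integral is `~ √(2π/3) / r`.
-/

open MeasureTheory Real Filter Set Topology

noncomputable def phaseExcess (v : ℝ) : ℝ := v + 1 / (2 * v ^ 2) - 3 / 2

lemma phaseExcess_one_add {w : ℝ} (hw : 1 + w ≠ 0) :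
    phaseExcess (1 + w) = w ^ 2 * ((3 + 2 * w) / (2 * (1 + w) ^ 2)) := by
  unfold phaseExcess
  field_simp
  ring

lemma sq_mul_phaseExcess_one_add_div {r s : ℝ} (hr : r ≠ 0) (hv : 1 + s / r ≠ 0) :
    r ^ 2 * phaseExcess (1 + s / r) = s ^ 2 * ((3 + 2 * (s / r)) / (2 * (1 + s / r) ^ 2)) := by
  rw [phaseExcess_one_add hv, div_pow, ← mul_assoc, mul_div_cancel₀ _ (pow_ne_zero 2 hr)]

lemma sq_div_two_le_sq_mul_phaseExcess {r s : ℝ} (hr : 0 < r) (hv : 0 < 1 + s / r)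
    (hsr : s ≤ r) : s ^ 2 / 2 ≤ r ^ 2 * phaseExcess (1 + s / r) := by
  have hw : s / r ≤ 1 := (div_le_one hr).2 hsr
  rw [sq_mul_phaseExcess_one_add_div hr.ne' hv.ne', div_eq_mul_one_div (s ^ 2)]
  gcongr s ^ 2 * ?_
  rw [div_le_div_iff₀ (by norm_num) (by positivity)]
  nlinarith

lemma div_four_le_sq_mul_phaseExcess {r s : ℝ} (hr : 1 ≤ r) (hrs : r ≤ s) :
    s / 4 ≤ r ^ 2 * phaseExcess (1 + s / r) := by
  set w := s / r
  have hw : 1 ≤ w := (one_le_div (by linarith)).2 hrs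
  have hws : w ≤ s := div_le_self (by linarith) hr
  have key : 2 * (1 + w) ^ 2 ≤ 4 * s * (3 + 2 * w) := by nlinarith
  rw [sq_mul_phaseExcess_one_add_div (by positivity) (by positivity), mul_div_assoc',
    div_le_div_iff₀ (by norm_num) (by positivity)]
  nlinarith

lemma tendsto_sq_mul_phaseExcess_one_add_div (s : ℝ) :
    Tendsto (fun r => r ^ 2 * phaseExcess (1 + s / r)) atTop (𝓝 (3 / 2 * s ^ 2)) := by
  have hq : ContinuousAt (fun w : ℝ => s ^ 2 * ((3 + 2 * w) / (2 * (1 + w) ^ 2))) 0 := by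
    fun_prop (disch := norm_num)
  have hlim := hq.tendsto.comp (tendsto_const_nhds.div_atTop tendsto_id (a := s) (l := atTop))
  refine Tendsto.congr' ?_ (hlim.trans_eq (by norm_num [mul_comm]))
  filter_upwards [eventually_gt_atTop |s|] with r hr
  have hr0 : 0 < r := (abs_nonneg s).trans_lt hr
  have hw : -1 < s / r := by rw [lt_div_iff₀ hr0, neg_one_mul]; linarith [neg_abs_le s]
  rw [Function.comp_apply, id_eq, sq_mul_phaseExcess_one_add_div hr0.ne' (by linarith)]

lemma integral_comp_add_div_s1 {E : Type*} [NormedAddCommGroup E] [NormedSpace ℝ E]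
    (f : ℝ → E) (c r : ℝ) : ∫ s, f (c + s / r) = |r| • ∫ v, f v := by
  rw [Measure.integral_comp_div (fun x => f (c + x)), integral_add_left_eq_self]

lemma exp_neg_sq_mul_phaseExcess_le {r s : ℝ} (hr : 1 ≤ r) (hs : 0 < 1 + s / r) :
    exp (-(r ^ 2 * phaseExcess (1 + s / r))) ≤
      exp (-(1 / 2) * s ^ 2) + (Ici 0).indicator (fun s => exp (-(1 / 4) * s)) s := by
  have hr0 : 0 < r := by linarith
  by_cases hsr : s ≤ r
  · have hlow := sq_div_two_le_sq_mul_phaseExcess hr0 hs hsr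
    calc exp (-(r ^ 2 * phaseExcess (1 + s / r))) ≤ exp (-(1 / 2) * s ^ 2) :=
          exp_le_exp.2 (by linarith)
      _ ≤ _ := le_add_of_nonneg_right (indicator_nonneg (fun _ _ => (exp_pos _).le) s)
  · have hlow := div_four_le_sq_mul_phaseExcess hr (not_le.1 hsr).le
    rw [indicator_of_mem (show s ∈ Ici 0 by simp only [mem_Ici]; linarith [not_le.1 hsr])]
    calc exp (-(r ^ 2 * phaseExcess (1 + s / r))) ≤ exp (-(1 / 4) * s) :=
          exp_le_exp.2 (by linarith)
      _ ≤ _ := le_add_of_nonneg_left (exp_pos _).le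

-- The indicator encodes the domain `s > -r` so that dominated convergence runs over one measure.
lemma tendsto_integral_exp_neg_sq_mul_phaseExcess :
    Tendsto (fun r => ∫ s, (Ioi 0).indicator
        (fun v => exp (-(r ^ 2 * phaseExcess v))) (1 + s / r)) atTop (𝓝 √(π / (3 / 2))) := by
  rw [← integral_gaussian]
  refine tendsto_integral_filter_of_dominated_convergence
    (fun s => exp (-(1 / 2) * s ^ 2) + (Ici 0).indicator (fun s => exp (-(1 / 4) * s)) s)
    (Eventually.of_forall fun r => ?_) ?_ ?_ (ae_of_all _ fun s => ?_)
  · have hphase : Measurable phaseExcess := by unfold phaseExcess; fun_prop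
    exact (((by fun_prop : Measurable fun v => exp (-(r ^ 2 * phaseExcess v))).indicator
      measurableSet_Ioi).comp (by fun_prop)).aestronglyMeasurable
  · filter_upwards [eventually_ge_atTop 1] with r hr
    refine ae_of_all _ fun s => ?_
    rw [norm_indicator_eq_indicator_norm]
    by_cases hs : 0 < 1 + s / r
    · rw [indicator_of_mem (mem_Ioi.2 hs), norm_of_nonneg (exp_pos _).le]
      exact exp_neg_sq_mul_phaseExcess_le hr hs
    · rw [indicator_of_notMem (notMem_Ioi.2 (not_lt.1 hs))]
      exact add_nonneg (exp_pos _).le (indicator_nonneg (fun _ _ => (exp_pos _).le) s)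
  · refine (integrable_exp_neg_mul_sq (by norm_num)).add ?_
    rw [integrable_indicator_iff measurableSet_Ici, integrableOn_Ici_iff_integrableOn_Ioi]
    exact exp_neg_integrableOn_Ioi 0 (by norm_num)
  · have hpos : ∀ᶠ r in atTop, 0 < 1 + s / r :=
      (tendsto_const_nhds.add (tendsto_const_nhds.div_atTop tendsto_id)).eventually
        (lt_mem_nhds (by norm_num : (0 : ℝ) < 1 + 0))
    refine ((tendsto_sq_mul_phaseExcess_one_add_div s).neg.rexp.congr' ?_).trans_eq ?_
    · filter_upwards [hpos] with r hr
      rw [indicator_of_mem (mem_Ioi.2 hr)]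
    · rw [neg_mul]

lemma tendsto_mul_integral_exp_neg_sq_mul_phaseExcess :
    Tendsto (fun r => r * ∫ v in Ioi 0, exp (-(r ^ 2 * phaseExcess v))) atTop
      (𝓝 √(π / (3 / 2))) := by
  refine tendsto_integral_exp_neg_sq_mul_phaseExcess.congr' ?_
  filter_upwards [eventually_gt_atTop 0] with r hr
  rw [integral_comp_add_div_s1, abs_of_pos hr, integral_indicator measurableSet_Ioi, smul_eq_mul]

lemma integral_exp_neg_div_sq_sub_mul {A b r : ℝ} (hb : 0 < b) (hr : 0 < r)
    (hA : r ^ 6 = 2 * b ^ 2 * A) :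
    ∫ u in Ioi 0, exp (-A / u ^ 2 - b * u) =
      r ^ 2 / b * exp (-(3 / 2 * r ^ 2)) * ∫ v in Ioi 0, exp (-(r ^ 2 * phaseExcess v)) := by
  have hc : 0 < r ^ 2 / b := by positivity
  have hphase : ∀ v ∈ Ioi (0 : ℝ), exp (-A / (r ^ 2 / b * v) ^ 2 - b * (r ^ 2 / b * v)) =
      exp (-(3 / 2 * r ^ 2)) * exp (-(r ^ 2 * phaseExcess v)) := by
    intro v hv
    have hv : v ≠ 0 := (mem_Ioi.1 hv).ne'
    rw [← exp_add, phaseExcess]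
    congr 1
    field_simp
    linear_combination hA
  rw [← mul_zero (r ^ 2 / b), ← integral_comp_mul_left_Ioi' _ _ hc, smul_eq_mul,
    setIntegral_congr_fun measurableSet_Ioi hphase, integral_const_mul, mul_zero, mul_assoc]

lemma laplace_prefactor_eq {a b t r : ℝ} (ha : 0 < a) (hb : 0 < b) (ht : 0 < t) (hr : 0 < r)
    (hr6 : r ^ 6 = 2 * b ^ 2 * (a * t)) :
    √(π / 3) * (2:ℝ) ^ ((2:ℝ)/3) * a ^ ((1:ℝ)/6) * b ^ (-(2:ℝ)/3) * t ^ ((1:ℝ)/6) *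
        exp (-3 * a ^ ((1:ℝ)/3) * b ^ ((2:ℝ)/3) * (2:ℝ) ^ (-(2:ℝ)/3) * t ^ ((1:ℝ)/3)) =
      r / b * √(π / (3 / 2)) * exp (-(3 / 2 * r ^ 2)) := by
  have hlog : 6 * log r = log 2 + 2 * log b + log a + log t := by
    have := congrArg log hr6
    simp (disch := positivity) only [log_mul, log_pow] at this
    push_cast at this
    linarith
  have hexponent : 3 * a ^ ((1:ℝ)/3) * b ^ ((2:ℝ)/3) * (2:ℝ) ^ (-(2:ℝ)/3) * t ^ ((1:ℝ)/3) =
      3 / 2 * r ^ 2 := by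
    apply Real.log_injOn_pos (mem_Ioi.2 (by positivity)) (mem_Ioi.2 (by positivity))
    simp (disch := positivity) only [log_mul, log_rpow, log_pow, log_div]
    linear_combination (-1 / 3 : ℝ) * hlog
  have hamplitude :
      √(π / 3) * (2:ℝ) ^ ((2:ℝ)/3) * a ^ ((1:ℝ)/6) * b ^ (-(2:ℝ)/3) * t ^ ((1:ℝ)/6) =
        r / b * √(π / (3 / 2)) := by
    apply Real.log_injOn_pos (mem_Ioi.2 (by positivity)) (mem_Ioi.2 (by positivity))
    simp (disch := positivity) only [log_mul, log_rpow, log_div, log_sqrt]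
    linear_combination (-1 / 6 : ℝ) * hlog
  rw [hamplitude, ← hexponent, neg_mul, neg_mul, neg_mul, neg_mul]

/-- For `a, b > 0`, as `t → ∞`,
`∫₀^∞ exp(-at/u² - bu) du ~ √(π/3)·2^{2/3}·a^{1/6}·b^{-2/3}·t^{1/6}·exp(-3a^{1/3}b^{2/3}2^{-2/3}t^{1/3})`. -/
theorem laplace_asymptotic_exp_integral (a b : ℝ) (ha : 0 < a) (hb : 0 < b) :
    Tendsto (fun t : ℝ =>
        (∫ u in Set.Ioi (0:ℝ), Real.exp (-(a * t) / u ^ 2 - b * u)) /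
          (Real.sqrt (π / 3) * (2:ℝ) ^ ((2:ℝ)/3) * a ^ ((1:ℝ)/6) * b ^ (-(2:ℝ)/3) *
            t ^ ((1:ℝ)/6) *
            Real.exp (-3 * a ^ ((1:ℝ)/3) * b ^ ((2:ℝ)/3) * (2:ℝ) ^ (-(2:ℝ)/3) * t ^ ((1:ℝ)/3))))
      atTop (nhds 1) := by
  obtain ⟨r, hr, hr_spec⟩ : ∃ r : ℝ → ℝ, Tendsto r atTop atTop ∧
      ∀ t > 0, 0 < r t ∧ r t ^ 6 = 2 * b ^ 2 * (a * t) := by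
    refine ⟨fun t => (2 * b ^ 2 * a * t) ^ (6⁻¹ : ℝ), ?_, fun t ht => ⟨by positivity, ?_⟩⟩
    · exact (tendsto_rpow_atTop (by norm_num)).comp
        (tendsto_id.const_mul_atTop (by positivity : 0 < 2 * b ^ 2 * a))
    · rw [← rpow_natCast, ← rpow_mul (by positivity), Nat.cast_ofNat,
        inv_mul_cancel₀ (by norm_num), rpow_one, mul_assoc]
  have hlim := (tendsto_mul_integral_exp_neg_sq_mul_phaseExcess.comp hr).div_const √(π / (3 / 2))
  rw [div_self (by positivity)] at hlim
  refine hlim.congr' ?_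
  filter_upwards [eventually_gt_atTop 0] with t ht
  obtain ⟨hr0, hr6⟩ := hr_spec t ht
  rw [Function.comp_apply, integral_exp_neg_div_sq_sub_mul hb hr0 hr6,
    laplace_prefactor_eq ha hb ht hr0 hr6]
  field_simp
end

section
/- Let a, b > 0. As t → ∞, ∫₀^∞ u · exp(-at/u² - bu) du is asymptotic to 2√(π/3) · a^{1/2} · b^{-1} · t^{1/2} · exp(-3 a^{1/3} b^{2/3} 2^{-2/3} t^{1/3}). -/
/-!
The phase `a t / u² + b u` is minimal at `u = c := (2 a t / b)^{1/3}`, with value `(3/2) r²`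
where `r := (2 a b² t)^{1/6}`, so that `c = r² / b`. Substituting `u = c (1 + s / r)` turns the
integral into `(r³ / b²) e^{-3r²/2} ∫ K_r`, where `K_r(s) = (1 + x) exp(-s² (3 + 2x) / (2 (1 + x)²))`
with `x = s / r` on `s > -r` (and `0` elsewhere). As `r → ∞`, `K_r` tends pointwise to the Gaussian
`exp(-3s²/2)` and is dominated by `C e^{-|s|/16}` uniformly in `r ≥ 1`, so `∫ K_r → √(2π/3)` by
dominated convergence.
-/

open MeasureTheory Real Filter Set Topology

lemma integrable_exp_neg_mul_abs_s2 {k : ℝ} (hk : 0 < k) :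
    Integrable fun s : ℝ ↦ exp (-k * |s|) := by
  by_contra h
  have h_eq := integral_comp_abs (f := fun s ↦ exp (-k * s))
  rw [integral_undef h, integral_exp_mul_Ioi (neg_neg_of_pos hk)] at h_eq
  norm_num [hk.ne'] at h_eq

theorem integral_comp_add_right_Ioi {E : Type*} [NormedAddCommGroup E] [NormedSpace ℝ E]
    (g : ℝ → E) (a d : ℝ) : ∫ x in Ioi a, g (x + d) = ∫ x in Ioi (a + d), g x := by
  have := (measurePreserving_add_right volume d).setIntegral_preimage_emb
    (measurableEmbedding_addRight d) g (Ioi (a + d))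
  rwa [preimage_add_const_Ioi, add_sub_cancel_right] at this

lemma one_div_eight_le_of_le_one {x : ℝ} (hx₁ : -1 < x) (hx₂ : x ≤ 1) :
    1 / 8 ≤ (3 + 2 * x) / (2 * (1 + x) ^ 2) := by
  rw [le_div_iff₀ (by nlinarith)]; nlinarith

lemma one_div_four_le_of_one_le {x : ℝ} (hx : 1 ≤ x) :
    1 / 4 ≤ x * (3 + 2 * x) / (2 * (1 + x) ^ 2) := by
  rw [le_div_iff₀ (by nlinarith)]; nlinarith

noncomputable def laplaceProfile (x s : ℝ) : ℝ :=
  (1 + x) * exp (-(s ^ 2 * ((3 + 2 * x) / (2 * (1 + x) ^ 2))))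

noncomputable def laplaceKernel (r s : ℝ) : ℝ :=
  (Ioi (-r)).indicator (fun s ↦ laplaceProfile (s / r) s) s

lemma abs_div_eight_sub_le {r s : ℝ} (hr : 1 ≤ r) (hs : -r < s) :
    |s| / 8 - 1 / 8 ≤ s ^ 2 * ((3 + 2 * (s / r)) / (2 * (1 + s / r) ^ 2)) := by
  have hr0 : 0 < r := by linarith
  rcases le_or_gt s r with hsr | hsr
  · have hx₁ : -1 < s / r := by rw [lt_div_iff₀ hr0]; linarith
    have hx₂ : s / r ≤ 1 := by rwa [div_le_one hr0]
    have := one_div_eight_le_of_le_one hx₁ hx₂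
    nlinarith [sq_abs s, sq_nonneg (|s| - 1)]
  · have hx : 1 ≤ s / r := by rw [le_div_iff₀ hr0]; linarith
    have h_eq : s ^ 2 * ((3 + 2 * (s / r)) / (2 * (1 + s / r) ^ 2))
        = s * r * (s / r * (3 + 2 * (s / r)) / (2 * (1 + s / r) ^ 2)) := by
      field_simp
    have := mul_le_mul_of_nonneg_left (one_div_four_le_of_one_le hx)
      (mul_pos (hr0.trans hsr) hr0).le
    rw [h_eq, abs_of_pos (by linarith)]
    nlinarith

lemma norm_laplaceKernel_le {r : ℝ} (hr : 1 ≤ r) (s : ℝ) :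
    ‖laplaceKernel r s‖ ≤ 16 * exp (1 / 8) * exp (-(1 / 16) * |s|) := by
  by_cases hs : s ∈ Ioi (-r)
  · have hr0 : 0 < r := by linarith
    have hx : 0 < 1 + s / r := by
      have : -1 < s / r := by rw [lt_div_iff₀ hr0]; linarith [mem_Ioi.mp hs]
      linarith
    have hx_le : 1 + s / r ≤ 1 + |s| := by
      have : s / r ≤ |s| :=
        (div_le_div_of_nonneg_right (le_abs_self s) hr0.le).trans (div_le_self (abs_nonneg s) hr)
      linarith
    rw [laplaceKernel, indicator_of_mem hs, laplaceProfile, norm_of_nonneg (by positivity)]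
    calc (1 + s / r) * exp (-(s ^ 2 * ((3 + 2 * (s / r)) / (2 * (1 + s / r) ^ 2))))
        ≤ (1 + |s|) * exp (-(|s| / 8 - 1 / 8)) := by
          gcongr
          exact abs_div_eight_sub_le hr hs
      _ ≤ 16 * exp (|s| / 16) * exp (-(|s| / 8 - 1 / 8)) := by
          gcongr
          linarith [add_one_le_exp (|s| / 16)]
      _ = 16 * exp (1 / 8) * exp (-(1 / 16) * |s|) := by
          rw [mul_assoc, mul_assoc, ← exp_add, ← exp_add]
          ring_nf
  · rw [laplaceKernel, indicator_of_notMem hs, norm_zero]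
    positivity

lemma tendsto_laplaceKernel (s : ℝ) :
    Tendsto (fun r ↦ laplaceKernel r s) atTop (𝓝 (exp (-(3 / 2) * s ^ 2))) := by
  have h_profile : ContinuousAt (fun x ↦ laplaceProfile x s) 0 := by
    unfold laplaceProfile
    have : (2 * (1 + (0:ℝ)) ^ 2) ≠ 0 := by norm_num
    fun_prop (disch := assumption)
  have h_lim := h_profile.tendsto.comp ((tendsto_const_nhds (x := s)).div_atTop tendsto_id)
  rw [show laplaceProfile 0 s = exp (-(3 / 2) * s ^ 2) by norm_num [laplaceProfile]; ring_nf]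
    at h_lim
  refine h_lim.congr' ?_
  filter_upwards [eventually_gt_atTop (-s)] with r hr
  rw [laplaceKernel, indicator_of_mem (show s ∈ Ioi (-r) from neg_lt.mp hr)]
  rfl

lemma tendsto_integral_laplaceKernel :
    Tendsto (fun r ↦ ∫ s, laplaceKernel r s) atTop (𝓝 √(2 * π / 3)) := by
  have h_meas (r : ℝ) : AEStronglyMeasurable (laplaceKernel r) volume := by
    refine (Measurable.indicator ?_ measurableSet_Ioi).aestronglyMeasurable
    unfold laplaceProfile
    fun_prop
  have h_gauss : ∫ s, exp (-(3 / 2) * s ^ 2) = √(2 * π / 3) := by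
    rw [integral_gaussian]; congr 1; ring
  rw [← h_gauss]
  exact tendsto_integral_filter_of_dominated_convergence _
    (.of_forall h_meas)
    ((eventually_ge_atTop 1).mono fun r hr ↦ .of_forall (norm_laplaceKernel_le hr))
    ((integrable_exp_neg_mul_abs_s2 (by norm_num)).const_mul _)
    (.of_forall tendsto_laplaceKernel)

lemma integral_laplaceKernel (r : ℝ) :
    ∫ s, laplaceKernel r s = ∫ s in Ioi (-r), laplaceProfile (s / r) s :=
  integral_indicator measurableSet_Ioi

lemma mul_exp_affine_eq {b r s : ℝ} (hb : 0 < b) (hr : 0 < r) (hs : -r < s) :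
    r / b * (s + r) * exp (-(r ^ 6 / (2 * b ^ 2)) / (r / b * (s + r)) ^ 2 - b * (r / b * (s + r)))
      = r ^ 2 / b * exp (-(3 / 2) * r ^ 2) * laplaceProfile (s / r) s := by
  have hsr : 0 < s + r := by linarith
  have h_exp : -(r ^ 6 / (2 * b ^ 2)) / (r / b * (s + r)) ^ 2 - b * (r / b * (s + r))
      = -(3 / 2) * r ^ 2 + -(s ^ 2 * ((3 + 2 * (s / r)) / (2 * (1 + s / r) ^ 2))) := by
    rw [show 1 + s / r = (s + r) / r by field_simp; ring]
    field_simp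
    ring
  rw [h_exp, exp_add, laplaceProfile]
  field_simp
  ring

lemma integral_mul_exp_eq {b r : ℝ} (hb : 0 < b) (hr : 0 < r) :
    ∫ u in Ioi 0, u * exp (-(r ^ 6 / (2 * b ^ 2)) / u ^ 2 - b * u)
      = r ^ 3 / b ^ 2 * exp (-(3 / 2) * r ^ 2) * ∫ s, laplaceKernel r s := by
  set f : ℝ → ℝ := fun u ↦ u * exp (-(r ^ 6 / (2 * b ^ 2)) / u ^ 2 - b * u)
  have hβ : 0 < r / b := div_pos hr hb
  calc ∫ u in Ioi 0, f u = r / b * ∫ s in Ioi (-r), f (r / b * (s + r)) := by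
        rw [integral_comp_add_right_Ioi (fun y ↦ f (r / b * y)), neg_add_cancel,
          integral_comp_mul_left_Ioi _ _ hβ, mul_zero, smul_eq_mul, mul_inv_cancel_left₀ hβ.ne']
    _ = r / b * ∫ s in Ioi (-r),
          r ^ 2 / b * exp (-(3 / 2) * r ^ 2) * laplaceProfile (s / r) s := by
        congr 1
        exact setIntegral_congr_fun measurableSet_Ioi fun s hs ↦ mul_exp_affine_eq hb hr hs
    _ = _ := by
        rw [integral_const_mul, integral_laplaceKernel]
        ring

lemma neg_exponent_eq {a b t r : ℝ} (ha : 0 < a) (hb : 0 < b) (ht : 0 < t)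
    (hr6 : r ^ 6 = 2 * a * b ^ 2 * t) :
    -3 * a ^ ((1:ℝ)/3) * b ^ ((2:ℝ)/3) * (2:ℝ) ^ (-(2:ℝ)/3) * t ^ ((1:ℝ)/3)
      = -(3 / 2) * r ^ 2 := by
  have h : 3 * a ^ ((1:ℝ)/3) * b ^ ((2:ℝ)/3) * (2:ℝ) ^ (-(2:ℝ)/3) * t ^ ((1:ℝ)/3)
      = 3 / 2 * r ^ 2 := by
    rw [← pow_left_inj₀ (by positivity) (by positivity) three_ne_zero]
    simp (disch := positivity) only [mul_pow, ← rpow_mul_natCast]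
    rw [← pow_mul, hr6]
    norm_num
    ring
  linarith

lemma prefactor_eq {a b t r : ℝ} (ha : 0 < a) (hb : 0 < b) (ht : 0 < t) (hr : 0 ≤ r)
    (hr6 : r ^ 6 = 2 * a * b ^ 2 * t) :
    2 * √(π / 3) * a ^ ((1:ℝ)/2) * b⁻¹ * t ^ ((1:ℝ)/2)
      = √(2 * π / 3) * (r ^ 3 / b ^ 2) := by
  rw [← pow_left_inj₀ (by positivity) (by positivity) two_ne_zero]
  simp (disch := positivity) only [mul_pow, div_pow, ← rpow_mul_natCast, sq_sqrt]
  rw [← pow_mul, hr6]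
  field_simp
  norm_num

/-- For `a, b > 0`, as `t → ∞`,
`∫₀^∞ u exp(-at/u² - bu) du ~ 2√(π/3)·a^{1/2}·b⁻¹·t^{1/2}·exp(-3a^{1/3}b^{2/3}2^{-2/3}t^{1/3})`. -/
theorem laplace_asymptotic_exp_integral_linear (a b : ℝ) (ha : 0 < a) (hb : 0 < b) :
    Tendsto (fun t : ℝ =>
        (∫ u in Set.Ioi (0:ℝ), u * Real.exp (-(a * t) / u ^ 2 - b * u)) /
          (2 * Real.sqrt (π / 3) * a ^ ((1:ℝ)/2) * b⁻¹ * t ^ ((1:ℝ)/2) *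
            Real.exp (-3 * a ^ ((1:ℝ)/3) * b ^ ((2:ℝ)/3) * (2:ℝ) ^ (-(2:ℝ)/3) * t ^ ((1:ℝ)/3))))
      atTop (nhds 1) := by
  set r : ℝ → ℝ := fun t ↦ (2 * a * b ^ 2 * t) ^ ((1:ℝ) / 6)
  have hr : Tendsto r atTop atTop :=
    (tendsto_rpow_atTop (by norm_num)).comp (tendsto_id.const_mul_atTop (by positivity))
  have h_const : √(2 * π / 3) ≠ 0 := by positivity
  have h_lim : Tendsto (fun t ↦ (∫ s, laplaceKernel (r t) s) / √(2 * π / 3)) atTop (𝓝 1) := by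
    simpa only [Function.comp_def, div_self h_const] using
      (tendsto_integral_laplaceKernel.comp hr).div_const √(2 * π / 3)
  refine h_lim.congr' ?_
  filter_upwards [eventually_gt_atTop 0] with t ht
  have hr0 : 0 < r t := by positivity
  have hr6 : r t ^ 6 = 2 * a * b ^ 2 * t := by
    rw [← rpow_natCast, ← rpow_mul (by positivity)]
    norm_num
  have hat : a * t = r t ^ 6 / (2 * b ^ 2) := by
    rw [hr6]; field_simp
  rw [hat, integral_mul_exp_eq hb hr0, neg_exponent_eq ha hb ht hr6,
    prefactor_eq ha hb ht hr0.le hr6]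
  field_simp
end

section
/- Let h, f : ℝ → ℝ be continuous with f ≤ 0, f attaining a strict global maximum at x₀ > 0 with f twice differentiable at x₀, f'(x₀) = 0, f''(x₀) < 0, h(x₀) ≠ 0, and ∫₀^∞ h(x) e^{λ f(x)} dx < ∞ for all λ > 0 (plus standard localization hypotheses). Then as λ → ∞, ∫₀^∞ h(x) e^{λ f(x)} dx ~ h(x₀) e^{λ f(x₀)} √(2π/(λ|f''(x₀)|)). -/
/-!
Put `g = f - f x₀`, so that `g x ~ f'' / 2 * (x - x₀) ^ 2` near `x₀` (L'Hôpital applied to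
`deriv f`). On a small ball around `x₀` the substitution `x = x₀ + t / √λ` turns
`√λ ∫ h e^{λ g}` into `∫ h(x₀ + t/√λ) e^{λ g(x₀ + t/√λ)} dt`, whose integrand tends to
`h x₀ e^{f'' t² / 2}` and is dominated by a Gaussian, so dominated convergence gives
`h x₀ √(2π / |f''|)`. Away from `x₀` we have `g ≤ -ε`, so that part of the integral is
`O(e^{-ελ})` and does not contribute.
-/

open MeasureTheory Real Filter Set Topology Asymptotics Metric

theorem tendsto_sub_div_sq_of_hasDerivAt_deriv {f : ℝ → ℝ} {x₀ f'' : ℝ} (hf : ContinuousAt f x₀)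
    (hd : deriv f x₀ = 0) (hd2 : HasDerivAt (deriv f) f'' x₀) (hf'' : f'' ≠ 0) :
    Tendsto (fun x => (f x - f x₀) / (x - x₀) ^ 2) (𝓝[≠] x₀) (𝓝 (f'' / 2)) := by
  have hslope : Tendsto (fun x => deriv f x / (x - x₀)) (𝓝[≠] x₀) (𝓝 f'') := by
    refine (hasDerivAt_iff_tendsto_slope.mp hd2).congr fun x => ?_
    rw [slope_def_field, hd, sub_zero]
  -- `deriv f` is `0` where `f` is not differentiable, so `deriv f x ≠ 0` near `x₀` gives
  -- differentiability on a punctured neighbourhood.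
  have hdiff : ∀ᶠ x in 𝓝[≠] x₀, HasDerivAt f (deriv f x) x := by
    filter_upwards [hslope.eventually_ne hf''] with x hx
    refine (differentiableAt_of_deriv_ne_zero fun h0 => hx ?_).hasDerivAt
    rw [h0, zero_div]
  refine HasDerivAt.lhopital_zero_nhdsNE (f' := deriv f) (g' := fun x => 2 * (x - x₀))
    (hdiff.mono fun x hx => hx.sub_const _) ?_ ?_ ?_ ?_ ?_
  · exact Eventually.of_forall fun x => by
      simpa using ((hasDerivAt_id x).sub_const x₀).fun_pow 2
  · filter_upwards [self_mem_nhdsWithin] with x hx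
    exact mul_ne_zero two_ne_zero (sub_ne_zero.mpr hx)
  · exact tendsto_nhdsWithin_of_tendsto_nhds (by simpa using hf.sub_const (f x₀))
  · exact tendsto_nhdsWithin_of_tendsto_nhds
      (Continuous.tendsto' (by fun_prop) x₀ 0 (by simp))
  · refine (hslope.div_const 2).congr fun x => ?_
    rw [div_div, mul_comm]

theorem isBigO_integral_mul_exp_mul_of_le_neg {α : Type*} [MeasurableSpace α] {μ : Measure α}
    {h g : α → ℝ} {ε : ℝ} (hint : Integrable (fun x => h x * exp (g x)) μ)
    (hg : ∀ᵐ x ∂μ, g x ≤ -ε) :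
    (fun l => ∫ x, h x * exp (l * g x) ∂μ) =O[atTop] fun l => exp (-ε * l) := by
  refine IsBigO.of_bound (exp ε * ∫ x, |h x * exp (g x)| ∂μ) ?_
  filter_upwards [eventually_ge_atTop 1] with l hl
  have hpt : ∀ᵐ x ∂μ, ‖h x * exp (l * g x)‖ ≤ exp (ε - ε * l) * |h x * exp (g x)| := by
    filter_upwards [hg] with x hx
    have : l * g x ≤ ε - ε * l + g x := by nlinarith
    rw [Real.norm_eq_abs, abs_mul, abs_mul, abs_exp, abs_exp, mul_left_comm, ← exp_add]
    exact mul_le_mul_of_nonneg_left (exp_le_exp.mpr (by linarith)) (abs_nonneg _)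
  calc ‖∫ x, h x * exp (l * g x) ∂μ‖
      ≤ ∫ x, exp (ε - ε * l) * |h x * exp (g x)| ∂μ :=
        norm_integral_le_of_norm_le (hint.abs.const_mul _) hpt
    _ = exp ε * (∫ x, |h x * exp (g x)| ∂μ) * ‖exp (-ε * l)‖ := by
        rw [integral_const_mul, norm_of_nonneg (exp_pos _).le, sub_eq_add_neg, exp_add,
          neg_mul]
        ring

theorem tendsto_add_div_sqrt_nhdsNE (x₀ : ℝ) {t : ℝ} (ht : t ≠ 0) :
    Tendsto (fun l => x₀ + t / √l) atTop (𝓝[≠] x₀) := by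
  refine tendsto_nhdsWithin_iff.mpr ⟨?_, ?_⟩
  · have : Tendsto (fun l => t / √l) atTop (𝓝 0) :=
      tendsto_const_nhds.div_atTop tendsto_sqrt_atTop
    simpa using this.const_add x₀
  · filter_upwards [eventually_gt_atTop 0] with l hl
    simpa [sqrt_ne_zero'.mpr hl] using ht

theorem tendsto_mul_exp_mul_comp_add_div_sqrt {h g : ℝ → ℝ} {x₀ a t : ℝ} (hh : ContinuousAt h x₀)
    (ht : t ≠ 0) (hlim : Tendsto (fun x => g x / (x - x₀) ^ 2) (𝓝[≠] x₀) (𝓝 (-a))) :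
    Tendsto (fun l => h (x₀ + t / √l) * exp (l * g (x₀ + t / √l))) atTop
      (𝓝 (h x₀ * exp (-a * t ^ 2))) := by
  have hshift := tendsto_add_div_sqrt_nhdsNE x₀ ht
  rw [mul_comm (-a)]
  refine Tendsto.congr' ?_ ((hh.tendsto.comp (tendsto_nhds_of_tendsto_nhdsWithin hshift)).mul
    ((continuous_exp.tendsto _).comp ((hlim.comp hshift).const_mul (t ^ 2))))
  -- at `x = x₀ + t / √l` the exponent `l * g x` equals `t ^ 2 * (g x / (x - x₀) ^ 2)`
  filter_upwards [eventually_gt_atTop 0] with l hl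
  simp only [Function.comp_apply, add_sub_cancel_left, div_pow, sq_sqrt hl.le]
  field_simp

theorem sqrt_mul_integral_eq_integral_add_div_sqrt (F : ℝ → ℝ) (x₀ l : ℝ) :
    √l * ∫ x, F x = ∫ t, F (x₀ + t / √l) := by
  rw [Measure.integral_comp_div (fun s => F (x₀ + s)), integral_add_left_eq_self,
    abs_of_nonneg (sqrt_nonneg l), smul_eq_mul]

theorem tendsto_sqrt_mul_integral_closedBall {h g : ℝ → ℝ} {x₀ a b δ : ℝ} (hh : Continuous h)
    (hg : Continuous g) (hδ : 0 < δ) (hb : 0 < b)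
    (hlim : Tendsto (fun x => g x / (x - x₀) ^ 2) (𝓝[≠] x₀) (𝓝 (-a)))
    (hbound : ∀ x ∈ closedBall x₀ δ, g x ≤ -b * (x - x₀) ^ 2) :
    Tendsto (fun l => √l * ∫ x in closedBall x₀ δ, h x * exp (l * g x)) atTop
      (𝓝 (h x₀ * √(π / a))) := by
  set F : ℝ → ℝ → ℝ := fun l => (closedBall x₀ δ).indicator fun x => h x * exp (l * g x)
  obtain ⟨M, hM⟩ := (isCompact_closedBall x₀ δ).exists_bound_of_continuousOn hh.continuousOn
  have hM0 : 0 ≤ M := (norm_nonneg _).trans (hM x₀ (mem_closedBall_self hδ.le))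
  have hdom : ∀ l > 0, ∀ t, ‖F l (x₀ + t / √l)‖ ≤ M * exp (-b * t ^ 2) := by
    intro l hl t
    simp only [F]
    by_cases hx : x₀ + t / √l ∈ closedBall x₀ δ
    · have hexp : l * g (x₀ + t / √l) ≤ -b * t ^ 2 := by
        have := mul_le_mul_of_nonneg_left (hbound _ hx) hl.le
        rwa [add_sub_cancel_left, div_pow, sq_sqrt hl.le, mul_left_comm,
          mul_div_cancel₀ _ hl.ne'] at this
      rw [indicator_of_mem hx, norm_mul, norm_of_nonneg (exp_pos _).le]
      exact mul_le_mul (hM _ hx) (exp_le_exp.mpr hexp) (exp_pos _).le hM0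
    · rw [indicator_of_notMem hx, norm_zero]
      positivity
  have hpointwise : ∀ t ≠ 0, Tendsto (fun l => F l (x₀ + t / √l)) atTop
      (𝓝 (h x₀ * exp (-a * t ^ 2))) := by
    intro t ht
    refine (tendsto_mul_exp_mul_comp_add_div_sqrt hh.continuousAt ht hlim).congr' ?_
    filter_upwards [(tendsto_add_div_sqrt_nhdsNE x₀ ht).eventually
      (mem_nhdsWithin_of_mem_nhds (closedBall_mem_nhds x₀ hδ))] with l hl
    exact (indicator_of_mem (mem_closedBall.mpr hl) fun x => h x * exp (l * g x)).symm
  have hlimit : ∫ t, h x₀ * exp (-a * t ^ 2) = h x₀ * √(π / a) := by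
    rw [integral_const_mul, integral_gaussian]
  rw [← hlimit]
  refine Tendsto.congr (fun l => ?_) (tendsto_integral_filter_of_dominated_convergence
    (F := fun l t => F l (x₀ + t / √l)) (fun t => M * exp (-b * t ^ 2)) ?_ ?_ ?_ ?_)
  · rw [← integral_indicator measurableSet_closedBall, sqrt_mul_integral_eq_integral_add_div_sqrt]
  · exact Eventually.of_forall fun l => (((hh.mul (continuous_const.mul hg).rexp).measurable
      |>.indicator measurableSet_closedBall).comp (by fun_prop)).aestronglyMeasurable
  · filter_upwards [eventually_gt_atTop 0] with l hl
    exact Eventually.of_forall (hdom l hl)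
  · exact (integrable_exp_neg_mul_sq hb).const_mul M
  · filter_upwards [Measure.ae_ne volume 0] with t ht
    exact hpointwise t ht

theorem tendsto_sqrt_mul_integral_mul_exp_mul {h g : ℝ → ℝ} {s : Set ℝ} {x₀ a : ℝ}
    (hh : Continuous h) (hg : Continuous g) (hs : MeasurableSet s) (hx₀ : s ∈ 𝓝 x₀)
    (hg₀ : g x₀ = 0) (ha : 0 < a)
    (hlim : Tendsto (fun x => g x / (x - x₀) ^ 2) (𝓝[≠] x₀) (𝓝 (-a)))
    (hint : ∀ l > 0, IntegrableOn (fun x => h x * exp (l * g x)) s)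
    (hloc : ∀ δ > 0, ∃ ε > 0, ∀ x ∈ s, δ ≤ |x - x₀| → g x ≤ -ε) :
    Tendsto (fun l => √l * ∫ x in s, h x * exp (l * g x)) atTop (𝓝 (h x₀ * √(π / a))) := by
  have hquad : ∀ᶠ x in 𝓝 x₀, x ∈ s ∧ g x ≤ -(a / 2) * (x - x₀) ^ 2 := by
    have hneg : -a < -(a / 2) := by linarith
    filter_upwards [hx₀, eventually_nhdsWithin_iff.mp (hlim.eventually (gt_mem_nhds hneg))]
      with x hxs hx
    refine ⟨hxs, ?_⟩
    rcases eq_or_ne x x₀ with rfl | hne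
    · simp [hg₀]
    · exact ((div_lt_iff₀ (pow_two_pos_of_ne_zero (sub_ne_zero.mpr hne))).mp (hx hne)).le
  obtain ⟨δ, hδ, hball⟩ := nhds_basis_closedBall.eventually_iff.mp hquad
  obtain ⟨ε, hε, hε_le⟩ := hloc δ hδ
  have hnear := tendsto_sqrt_mul_integral_closedBall hh hg hδ (half_pos ha) hlim
    fun x hx => (hball hx).2
  have htail : Tendsto (fun l => √l * ∫ x in s \ closedBall x₀ δ, h x * exp (l * g x)) atTop
      (𝓝 0) := by
    have hS := hs.diff (measurableSet_closedBall (x := x₀) (ε := δ))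
    have hint₁ : IntegrableOn (fun x => h x * exp (g x)) (s \ closedBall x₀ δ) := by
      simpa only [one_mul] using (hint 1 one_pos).mono_set sdiff_subset
    have hO := isBigO_integral_mul_exp_mul_of_le_neg hint₁
      (ae_restrict_of_forall_mem hS fun x hx => hε_le x hx.1 (not_le.mp hx.2).le)
    refine ((isBigO_refl (fun l : ℝ => √l) atTop).mul hO).trans_tendsto ?_
    simpa [sqrt_eq_rpow] using tendsto_rpow_mul_exp_neg_mul_atTop_nhds_zero (1 / 2) ε hε
  refine (by simpa using hnear.add htail : Tendsto _ atTop _).congr' ?_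
  filter_upwards [eventually_gt_atTop 0] with l hl
  rw [← mul_add, ← integral_inter_add_sdiff measurableSet_closedBall (hint l hl),
    inter_eq_right.mpr fun x hx => (hball hx).1]

theorem laplace_method_general (h f : ℝ → ℝ) (x₀ f'' : ℝ)
    (hh : Continuous h) (hf : Continuous f)
    (hx₀ : 0 < x₀)
    (hderiv : deriv f x₀ = 0)
    (hderiv2 : HasDerivAt (deriv f) f'' x₀)
    (hf''neg : f'' < 0)
    (hhx₀ : h x₀ ≠ 0)
    (hint : ∀ l : ℝ, 0 < l →
      IntegrableOn (fun x => h x * Real.exp (l * f x)) (Set.Ioi 0))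
    (hloc : ∀ δ > (0:ℝ), ∃ ε > (0:ℝ), ∀ x, 0 ≤ x → δ ≤ |x - x₀| → f x ≤ f x₀ - ε) :
    Tendsto (fun l : ℝ =>
        (∫ x in Set.Ioi (0:ℝ), h x * Real.exp (l * f x)) /
          (h x₀ * Real.exp (l * f x₀) * Real.sqrt (2 * π / (l * |f''|))))
      atTop (nhds 1) := by
  have hfactor : ∀ l x, h x * exp (l * f x) = exp (l * f x₀) * (h x * exp (l * (f x - f x₀))) :=
    fun l x => by rw [mul_left_comm, ← exp_add]; ring_nf
  have hlim : Tendsto (fun x => (f x - f x₀) / (x - x₀) ^ 2) (𝓝[≠] x₀) (𝓝 (-(|f''| / 2))) := by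
    rw [abs_of_neg hf''neg, neg_div, neg_neg]
    exact tendsto_sub_div_sq_of_hasDerivAt_deriv hf.continuousAt hderiv hderiv2 hf''neg.ne
  have hint' : ∀ l > 0, IntegrableOn (fun x => h x * exp (l * (f x - f x₀))) (Ioi 0) := by
    intro l hl
    refine IntegrableOn.congr_fun (Integrable.const_mul (hint l hl) (exp (-(l * f x₀))))
      (fun x _ => ?_) measurableSet_Ioi
    rw [hfactor l x, ← mul_assoc, ← exp_add, neg_add_cancel, exp_zero, one_mul]
  have hloc' : ∀ δ > 0, ∃ ε > 0, ∀ x ∈ Ioi 0, δ ≤ |x - x₀| → f x - f x₀ ≤ -ε :=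
    fun δ hδ => (hloc δ hδ).imp fun ε ⟨hε, hle⟩ =>
      ⟨hε, fun x hx hd => by linarith [hle x (le_of_lt hx) hd]⟩
  have ha : 0 < |f''| / 2 := half_pos (abs_pos.mpr hf''neg.ne)
  have hmain := tendsto_sqrt_mul_integral_mul_exp_mul (g := fun x => f x - f x₀) hh (by fun_prop)
    measurableSet_Ioi (Ioi_mem_nhds hx₀) (sub_self _) ha hlim hint' hloc'
  have hC : h x₀ * √(π / (|f''| / 2)) ≠ 0 := mul_ne_zero hhx₀ (by positivity)
  refine (div_self hC ▸ hmain.div_const (h x₀ * √(π / (|f''| / 2)))).congr' ?_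
  filter_upwards [eventually_gt_atTop 0] with l hl
  have hsqrt : √(2 * π / (l * |f''|)) = √(π / (|f''| / 2)) / √l := by
    rw [← sqrt_div' _ hl.le]; congr 1; field_simp
  have hnum : ∫ x in Ioi 0, h x * exp (l * f x)
      = exp (l * f x₀) * ∫ x in Ioi 0, h x * exp (l * (f x - f x₀)) := by
    simp_rw [hfactor l]
    exact integral_const_mul _ _
  rw [hnum, hsqrt]
  field_simp

/-- The classical Laplace method: if `f ≤ 0` is continuous with a strict global maximum at
`x₀ > 0`, `f'(x₀) = 0`, `f''(x₀) < 0`, `h` is continuous with `h x₀ ≠ 0`, the integrals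
converge, and `f` stays away from its maximum away from `x₀` (localization), then as `λ → ∞`,
`∫₀^∞ h(x) e^{λ f(x)} dx ~ h(x₀) e^{λ f(x₀)} √(2π/(λ|f''(x₀)|))`. -/
theorem laplace_method (h f : ℝ → ℝ) (x₀ f'' : ℝ)
    (hh : Continuous h) (hf : Continuous f)
    (hfneg : ∀ x, f x ≤ 0)
    (hx₀ : 0 < x₀)
    (hmax : ∀ x, x ≠ x₀ → f x < f x₀)
    (hderiv : deriv f x₀ = 0)
    (hderiv2 : HasDerivAt (deriv f) f'' x₀)
    (hf''neg : f'' < 0)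
    (hhx₀ : h x₀ ≠ 0)
    (hint : ∀ l : ℝ, 0 < l →
      IntegrableOn (fun x => h x * Real.exp (l * f x)) (Set.Ioi 0))
    (hloc : ∀ δ > (0:ℝ), ∃ ε > (0:ℝ), ∀ x, 0 ≤ x → δ ≤ |x - x₀| → f x ≤ f x₀ - ε) :
    Tendsto (fun l : ℝ =>
        (∫ x in Set.Ioi (0:ℝ), h x * Real.exp (l * f x)) /
          (h x₀ * Real.exp (l * f x₀) * Real.sqrt (2 * π / (l * |f''|))))
      atTop (nhds 1) :=
  laplace_method_general h f x₀ f'' hh hf hx₀ hderiv hderiv2 hf''neg hhx₀ hint hloc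
end
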